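/- arXiv:2306.02338 — 3 statements merged into one kernel-verified Lean document; each statement's English description precedes it below -/
import Mathlib

section
/- Let G = (V, E) be a finite simple undirected graph with n = |V|, ℓ : V → C a coloring, and α a real number with 1/|C| ≤ α ≤ 1. Assume α(V) ≤ α. Then for every S ⊆ V with |S| ≥ ⌈1/α⌉ there exists T with S ⊆ T ⊆ V such that α(T) ≤ α, c_max(T) = c_max(S), and |T| ≤ min{⌈1/α⌉, α·n} · |S|. -/
open Finset

/-- `S_c`, the set of nodes of `S` with color `c`. -/
def colorClass {V C : Type*} [DecidableEq V] [DecidableEq C] (ℓ : V → C) (S : Finset V) (c : C) :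
    Finset V := S.filter (fun v => ℓ v = c)

/-- `c_max(S)`, the maximum number of nodes of `S` sharing a single color. -/
def cmax {V C : Type*} [DecidableEq V] [Fintype C] [DecidableEq C] (ℓ : V → C) (S : Finset V) : ℕ :=
  Finset.univ.sup (fun c => (colorClass ℓ S c).card)

/-- `α(S) = c_max(S)/|S|`, the maximum fraction of monochromatic nodes in `S`. -/
noncomputable def alphaOf {V C : Type*} [DecidableEq V] [Fintype C] [DecidableEq C]
    (ℓ : V → C) (S : Finset V) : ℝ := (cmax ℓ S : ℝ) / S.card

/-!
Let `m = c_max(S)`. Take a largest `U ⊇ S` in which every color occurs at most `m` times: by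
maximality each color class of `U` has at least `min(m, |V_c|)` nodes. Since `|V_c| ≤ αn`, we have
`min(m, |V_c|) ≥ (m / αn) |V_c|`, and summing over the colors gives `|U| ≥ m/α`. Any `T` with
`S ⊆ T ⊆ U` and `|T| = max(|S|, ⌈m/α⌉)` then has `c_max(T) = m ≤ α|T|`, and the size bound
follows from `m ≤ |S|`, `m ≤ αn` and `1/α ≤ |S|`.
-/

lemma colorClass_mono {V C : Type*} [DecidableEq V] [DecidableEq C] (ℓ : V → C) {S T : Finset V}
    (h : S ⊆ T) (c : C) : colorClass ℓ S c ⊆ colorClass ℓ T c :=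
  filter_subset_filter _ h

section ColorClasses

variable {V C : Type*} [DecidableEq V] [Fintype C] [DecidableEq C] (ℓ : V → C)

lemma colorClass_card_le_cmax (S : Finset V) (c : C) : (colorClass ℓ S c).card ≤ cmax ℓ S :=
  le_sup (f := fun c => (colorClass ℓ S c).card) (mem_univ c)

lemma cmax_le_iff {S : Finset V} {m : ℕ} : cmax ℓ S ≤ m ↔ ∀ c, (colorClass ℓ S c).card ≤ m := by
  simp [cmax]

lemma cmax_mono {S T : Finset V} (h : S ⊆ T) : cmax ℓ S ≤ cmax ℓ T :=
  sup_mono_fun fun c _ => card_le_card (colorClass_mono ℓ h c)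

lemma cmax_le_card (S : Finset V) : cmax ℓ S ≤ S.card :=
  (cmax_le_iff ℓ).2 fun _ => card_le_card (filter_subset _ _)

lemma cmax_pos {S : Finset V} (h : S.Nonempty) : 0 < cmax ℓ S := by
  obtain ⟨v, hv⟩ := h
  have hmem : v ∈ colorClass ℓ S (ℓ v) := mem_filter.2 ⟨hv, rfl⟩
  exact (card_pos.2 ⟨v, hmem⟩).trans_le (colorClass_card_le_cmax ℓ S (ℓ v))

lemma card_eq_sum_card_colorClass (S : Finset V) : S.card = ∑ c, (colorClass ℓ S c).card :=
  card_eq_sum_card_fiberwise fun v _ => mem_coe.2 (mem_univ (ℓ v))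

lemma cmax_insert_le {U : Finset V} {m : ℕ} {v : V} (hU : cmax ℓ U ≤ m)
    (hv : (colorClass ℓ U (ℓ v)).card < m) : cmax ℓ (insert v U) ≤ m := by
  rw [cmax_le_iff] at hU ⊢
  intro c
  rw [colorClass, filter_insert]
  split_ifs with hc
  · subst hc
    exact (card_insert_le _ _).trans hv
  · exact hU c

lemma alphaOf_pos {S : Finset V} (h : S.Nonempty) : 0 < alphaOf ℓ S :=
  div_pos (Nat.cast_pos.2 (cmax_pos ℓ h)) (Nat.cast_pos.2 h.card_pos)

lemma alphaOf_le_iff {S : Finset V} (h : S.Nonempty) {α : ℝ} :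
    alphaOf ℓ S ≤ α ↔ (cmax ℓ S : ℝ) ≤ α * S.card :=
  div_le_iff₀ (Nat.cast_pos.2 h.card_pos)

end ColorClasses

section Extension

variable {V C : Type*} [Fintype V] [DecidableEq V] [Fintype C] [DecidableEq C] (ℓ : V → C)

lemma exists_superset_cmax_le_saturated {S : Finset V} {m : ℕ} (hS : cmax ℓ S ≤ m) :
    ∃ U, S ⊆ U ∧ cmax ℓ U ≤ m ∧
      ∀ c, min m (colorClass ℓ univ c).card ≤ (colorClass ℓ U c).card := by
  obtain ⟨U, hU, hmax⟩ := (univ.powerset.filter fun T => S ⊆ T ∧ cmax ℓ T ≤ m).exists_max_image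
    card ⟨S, by simp [hS]⟩
  simp only [mem_filter, mem_powerset, subset_univ, true_and, and_imp] at hU hmax
  refine ⟨U, hU.1, hU.2, fun c => ?_⟩
  by_contra! hlt
  obtain ⟨v, hvV, hvU⟩ := exists_mem_notMem_of_card_lt_card (hlt.trans_le (min_le_right _ _))
  have hvc : ℓ v = c := (mem_filter.1 hvV).2
  have hvU' : v ∉ U := fun h => hvU (mem_filter.2 ⟨h, hvc⟩)
  have hins : cmax ℓ (insert v U) ≤ m :=
    cmax_insert_le ℓ hU.2 (hvc ▸ hlt.trans_le (min_le_left _ _))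
  have hle := hmax (insert v U) (hU.1.trans (subset_insert _ _)) hins
  rw [card_insert_of_notMem hvU'] at hle
  omega

lemma mul_card_le_mul_sum_min_card_colorClass {α : ℝ} {m : ℕ}
    (hV : (cmax ℓ univ : ℝ) ≤ α * Fintype.card V) (hm : (m : ℝ) ≤ α * Fintype.card V) :
    (m : ℝ) * Fintype.card V ≤
      α * Fintype.card V * ∑ c, ((min m (colorClass ℓ univ c).card : ℕ) : ℝ) := by
  have hn : (Fintype.card V : ℝ) = ∑ c, ((colorClass ℓ univ c).card : ℝ) := by
    rw [← card_univ, card_eq_sum_card_colorClass ℓ univ, Nat.cast_sum]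
  have hle : ∀ c, (m : ℝ) * (colorClass ℓ univ c).card ≤
      α * Fintype.card V * (min m (colorClass ℓ univ c).card : ℕ) := by
    intro c
    have hc : ((colorClass ℓ univ c).card : ℝ) ≤ α * Fintype.card V :=
      le_trans (by exact_mod_cast colorClass_card_le_cmax ℓ univ c) hV
    rcases le_total m (colorClass ℓ univ c).card with h | h
    · rw [min_eq_left h, mul_comm (α * _)]
      exact mul_le_mul_of_nonneg_left hc (Nat.cast_nonneg _)
    · rw [min_eq_right h]
      exact mul_le_mul_of_nonneg_right hm (Nat.cast_nonneg _)
  calc (m : ℝ) * Fintype.card V = ∑ c, (m : ℝ) * (colorClass ℓ univ c).card := by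
        rw [hn, mul_sum]
    _ ≤ ∑ c, α * Fintype.card V * (min m (colorClass ℓ univ c).card : ℕ) :=
        sum_le_sum fun c _ => hle c
    _ = _ := (mul_sum _ _ _).symm

lemma exists_superset_cmax_eq_le_mul_card {α : ℝ}
    (hV : (cmax ℓ univ : ℝ) ≤ α * Fintype.card V) (S : Finset V) :
    ∃ U, S ⊆ U ∧ cmax ℓ U = cmax ℓ S ∧ (cmax ℓ S : ℝ) ≤ α * U.card := by
  obtain ⟨U, hSU, hUm, hUc⟩ := exists_superset_cmax_le_saturated ℓ le_rfl (S := S)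
  refine ⟨U, hSU, le_antisymm hUm (cmax_mono ℓ hSU), ?_⟩
  rcases isEmpty_or_nonempty V with hVe | hVne
  · simp [eq_empty_of_isEmpty S, eq_empty_of_isEmpty U, cmax, colorClass]
  have hn : (0 : ℝ) < Fintype.card V := Nat.cast_pos.2 Fintype.card_pos
  have hαn : 0 ≤ α * Fintype.card V := le_trans (Nat.cast_nonneg _) hV
  have hsum : ∑ c, ((min (cmax ℓ S) (colorClass ℓ univ c).card : ℕ) : ℝ) ≤ U.card := by
    rw [card_eq_sum_card_colorClass ℓ U]
    exact_mod_cast sum_le_sum fun c _ => hUc c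
  have hmn : (cmax ℓ S : ℝ) ≤ α * Fintype.card V :=
    le_trans (by exact_mod_cast cmax_mono ℓ (subset_univ S)) hV
  refine le_of_mul_le_mul_right ?_ hn
  calc (cmax ℓ S : ℝ) * Fintype.card V
      ≤ α * Fintype.card V * ∑ c, ((min (cmax ℓ S) (colorClass ℓ univ c).card : ℕ) : ℝ) :=
        mul_card_le_mul_sum_min_card_colorClass ℓ hV hmn
    _ ≤ α * Fintype.card V * U.card := mul_le_mul_of_nonneg_left hsum hαn
    _ = α * U.card * Fintype.card V := by ring

lemma exists_superset_cmax_eq_card_eq_max {α : ℝ} (hα : 0 < α)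
    (hV : (cmax ℓ univ : ℝ) ≤ α * Fintype.card V) (S : Finset V) :
    ∃ T, S ⊆ T ∧ cmax ℓ T = cmax ℓ S ∧ (cmax ℓ S : ℝ) ≤ α * T.card ∧
      T.card = max S.card ⌈(cmax ℓ S : ℝ) / α⌉₊ := by
  obtain ⟨U, hSU, hUm, hmU⟩ := exists_superset_cmax_eq_le_mul_card ℓ hV S
  have hceil : ⌈(cmax ℓ S : ℝ) / α⌉₊ ≤ U.card := Nat.ceil_le.2 ((div_le_iff₀' hα).2 hmU)
  obtain ⟨T, hST, hTU, hT⟩ :=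
    exists_subsuperset_card_eq hSU (le_max_left _ _) (max_le (card_le_card hSU) hceil)
  refine ⟨T, hST, le_antisymm (hUm ▸ cmax_mono ℓ hTU) (cmax_mono ℓ hST), ?_, hT⟩
  rw [← div_le_iff₀' hα]
  calc (cmax ℓ S : ℝ) / α ≤ ⌈(cmax ℓ S : ℝ) / α⌉₊ := Nat.le_ceil _
    _ ≤ T.card := by exact_mod_cast hT ▸ le_max_right _ _

end Extension

lemma Nat.ceil_div_le_mul_ceil_one_div (m : ℕ) (α : ℝ) : ⌈(m : ℝ) / α⌉₊ ≤ m * ⌈1 / α⌉₊ := by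
  refine Nat.ceil_le.2 ?_
  rw [div_eq_mul_one_div, Nat.cast_mul]
  exact mul_le_mul_of_nonneg_left (Nat.le_ceil _) (Nat.cast_nonneg _)

lemma max_ceil_div_le_min_mul {α : ℝ} {m s n : ℕ} (hα : 0 < α) (hms : m ≤ s)
    (hmn : (m : ℝ) ≤ α * n) (hn : 1 ≤ α * n) (hs : ⌈1 / α⌉₊ ≤ s) :
    ((max s ⌈(m : ℝ) / α⌉₊ : ℕ) : ℝ) ≤ min (⌈1 / α⌉₊ : ℝ) (α * n) * s := by
  have hk : 1 ≤ ⌈1 / α⌉₊ := Nat.one_le_ceil_iff.2 (by positivity)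
  have hαs : 1 ≤ α * s := by
    rw [← div_le_iff₀' hα]
    exact (Nat.le_ceil _).trans (by exact_mod_cast hs)
  have hceil_n : (⌈(m : ℝ) / α⌉₊ : ℝ) ≤ n := by
    exact_mod_cast Nat.ceil_le.2 ((div_le_iff₀' hα).2 hmn)
  rw [min_mul_of_nonneg _ _ (Nat.cast_nonneg s), le_min_iff]
  constructor
  · have : max s ⌈(m : ℝ) / α⌉₊ ≤ ⌈1 / α⌉₊ * s :=
      max_le (Nat.le_mul_of_pos_left _ hk)
        ((Nat.ceil_div_le_mul_ceil_one_div m α).trans (by rw [mul_comm]; gcongr))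
    exact_mod_cast this
  · rw [Nat.cast_max]
    refine max_le (le_mul_of_one_le_left (Nat.cast_nonneg _) hn) (hceil_n.trans ?_)
    calc (n : ℝ) = n * 1 := (mul_one _).symm
      _ ≤ n * (α * s) := mul_le_mul_of_nonneg_left hαs (Nat.cast_nonneg _)
      _ = α * n * s := by ring

theorem stmt4_general {V C : Type*} [Fintype V] [DecidableEq V] [Fintype C] [DecidableEq C]
    (ℓ : V → C) (α : ℝ)
    (hV : alphaOf ℓ (Finset.univ : Finset V) ≤ α)
    (S : Finset V) (hS : ⌈1 / α⌉₊ ≤ S.card) :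
    ∃ T : Finset V, S ⊆ T ∧ alphaOf ℓ T ≤ α ∧ cmax ℓ T = cmax ℓ S ∧
      (T.card : ℝ) ≤ min ((⌈1 / α⌉₊ : ℝ)) (α * Fintype.card V) * S.card := by
  rcases S.eq_empty_or_nonempty with rfl | hSne
  · refine ⟨∅, subset_rfl, ?_, rfl, by simp⟩
    have hα : 0 ≤ α := le_trans (div_nonneg (Nat.cast_nonneg _) (Nat.cast_nonneg _)) hV
    simpa [alphaOf] using hα
  have hVne : (univ : Finset V).Nonempty := univ_nonempty_iff.2 hSne.to_type
  have hα : 0 < α := (alphaOf_pos ℓ hVne).trans_le hV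
  have hVα : (cmax ℓ univ : ℝ) ≤ α * Fintype.card V := (alphaOf_le_iff ℓ hVne).1 hV
  obtain ⟨T, hST, hTm, hmT, hTcard⟩ := exists_superset_cmax_eq_card_eq_max ℓ hα hVα S
  refine ⟨T, hST, (alphaOf_le_iff ℓ (hSne.mono hST)).2 (hTm ▸ hmT), hTm, ?_⟩
  have hmn : (cmax ℓ S : ℝ) ≤ α * Fintype.card V :=
    le_trans (by exact_mod_cast cmax_mono ℓ (subset_univ S)) hVα
  have hn : (1 : ℝ) ≤ α * Fintype.card V :=
    le_trans (by exact_mod_cast cmax_pos ℓ hVne) hVα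
  rw [hTcard]
  exact max_ceil_div_le_min_mul hα (cmax_le_card ℓ S) hmn hn hS

/-- If `V` itself is diverse, every `S` with `|S| ≥ ⌈1/α⌉` extends to a diverse superset `T`
with `c_max(T) = c_max(S)` and `|T| ≤ min{⌈1/α⌉, αn}·|S|`. -/
theorem stmt4 {V C : Type*} [Fintype V] [DecidableEq V] [Fintype C] [DecidableEq C]
    (G : SimpleGraph V) [DecidableRel G.Adj] (ℓ : V → C) (α : ℝ)
    (hα₁ : 1 / (Fintype.card C : ℝ) ≤ α) (hα₂ : α ≤ 1)
    (hV : alphaOf ℓ (Finset.univ : Finset V) ≤ α)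
    (S : Finset V) (hS : ⌈1 / α⌉₊ ≤ S.card) :
    ∃ T : Finset V, S ⊆ T ∧ alphaOf ℓ T ≤ α ∧ cmax ℓ T = cmax ℓ S ∧
      (T.card : ℝ) ≤ min ((⌈1 / α⌉₊ : ℝ)) (α * Fintype.card V) * S.card :=
  stmt4_general ℓ α hV S hS
end

section
/- Let G = (V, E) be a finite simple undirected graph, ℓ : V → C a coloring, and k⃗ = (k_c)_{c∈C} ∈ ℤ_{≥0}^{|C|} with k_c ≤ |V_c| for every c ∈ C and k_c ≥ 1 for some c ∈ C. Let S* ⊆ V be an optimal solution to Dal k⃗ S, let p*_c = |S*_c| for each c ∈ C, and let (x*, y*) be an optimal solution to LP(p*). Then there exist r ∈ {y*_v : v ∈ V} ∪ {0} and S' with S(r) ⊆ S' ⊆ V, where S(r) = {v ∈ V : y*_v ≥ r}, such that |S'_c| ≥ k_c for every c ∈ C and d(S') ≥ d(S*)/3 (i.e., S' is a 1/3-approximate solution to Dal k⃗ S). -/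
open Finset

/-- The set of edges of `G` with both endpoints in `S`. -/
def edgesIn {V : Type*} [Fintype V] [DecidableEq V] (G : SimpleGraph V) [DecidableRel G.Adj]
    (S : Finset V) : Finset (Sym2 V) :=
  G.edgeFinset.filter (fun e => ∀ v ∈ e, v ∈ S)

/-- The (degree) density `d(S) = |E(S)|/|S|`. -/
noncomputable def density {V : Type*} [Fintype V] [DecidableEq V] (G : SimpleGraph V)
    [DecidableRel G.Adj] (S : Finset V) : ℝ :=
  ((edgesIn G S).card : ℝ) / S.card

/-- Feasibility for the linear program `LP(p)`. -/
def LPFeasible {V C : Type*} [Fintype V] [DecidableEq V] [Fintype C] [DecidableEq C]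
    (G : SimpleGraph V) [DecidableRel G.Adj] (ℓ : V → C) (p : C → ℕ)
    (x : Sym2 V → ℝ) (y : V → ℝ) : Prop :=
  (∀ e ∈ G.edgeFinset, ∀ v ∈ e, x e ≤ y v) ∧
  (∀ c : C, ∑ v ∈ Finset.univ.filter (fun v => ℓ v = c), y v
      = (p c : ℝ) / ((∑ c' : C, p c' : ℕ) : ℝ)) ∧
  (∀ v : V, y v ≤ 1 / ((∑ c' : C, p c' : ℕ) : ℝ)) ∧
  (∀ e ∈ G.edgeFinset, 0 ≤ x e) ∧
  (∀ v : V, 0 ≤ y v)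

/-!
Scaling the indicator of `S*` by `1/|S*|` gives a feasible point of `LP(p*)` of value `d(S*)`,
so the optimum satisfies `∑ x* ≥ d(S*) = d(S*) · ∑ y*`. Writing `y*` as a sum of indicators of
its level sets (layer cake), `∑ y* = ∑ᵢ (rᵢ - rᵢ₋₁) |S(rᵢ)|` and `∑ x* ≤ ∑ᵢ (rᵢ - rᵢ₋₁) |E(S(rᵢ))|`,
so some level set `A = S(r)` with `r > 0` has `|E(A)| ≥ d(S*) |A|`. Then `S' = A ∪ S*` is
feasible and `|E(S')| ≥ max (|E(A)|, |E(S*)|) ≥ d(S*) (|A| + |S*|) / 2`, so `d(S') ≥ d(S*)/2`.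
-/

section Density

variable {V : Type*} [Fintype V] [DecidableEq V] (G : SimpleGraph V) [DecidableRel G.Adj]

lemma edgesIn_subset_edgeFinset (S : Finset V) : edgesIn G S ⊆ G.edgeFinset :=
  filter_subset _ _

lemma edgesIn_mono {S T : Finset V} (h : S ⊆ T) : edgesIn G S ⊆ edgesIn G T := fun _ he =>
  mem_filter.2 ⟨(mem_filter.1 he).1, fun v hv => h ((mem_filter.1 he).2 v hv)⟩

lemma density_nonneg (S : Finset V) : 0 ≤ density G S := by
  unfold density
  positivity

lemma density_mul_card_le (S : Finset V) : density G S * #S ≤ #(edgesIn G S) := by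
  rcases S.eq_empty_or_nonempty with rfl | hS
  · simp
  · rw [density, div_mul_cancel₀ _ (by exact_mod_cast hS.card_pos.ne')]

lemma le_density_of_mul_card_le {S : Finset V} {a : ℝ} (hS : S.Nonempty)
    (h : a * #S ≤ #(edgesIn G S)) : a ≤ density G S := by
  rwa [density, le_div_iff₀ (by exact_mod_cast hS.card_pos)]

lemma half_le_density_union {A B : Finset V} {d : ℝ} (hd : 0 ≤ d) (hA : A.Nonempty)
    (hAd : d * #A ≤ #(edgesIn G A)) (hBd : d * #B ≤ #(edgesIn G B)) :
    d / 2 ≤ density G (A ∪ B) := by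
  apply le_density_of_mul_card_le G (hA.mono subset_union_left)
  have hEA : (#(edgesIn G A) : ℝ) ≤ #(edgesIn G (A ∪ B)) := by
    exact_mod_cast card_le_card (edgesIn_mono G subset_union_left)
  have hEB : (#(edgesIn G B) : ℝ) ≤ #(edgesIn G (A ∪ B)) := by
    exact_mod_cast card_le_card (edgesIn_mono G subset_union_right)
  have hcard : (#(A ∪ B) : ℝ) ≤ #A + #B := by exact_mod_cast card_union_le A B
  nlinarith

end Density

noncomputable def upperLevelSet {V : Type*} [Fintype V] (w : V → ℝ) (t : ℝ) : Finset V :=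
  univ.filter fun v => t ≤ w v

lemma sub_min_le_sub_min {a b : ℝ} (r : ℝ) (h : a ≤ b) : a - min a r ≤ b - min b r := by
  rcases le_total a r with ha | ha <;> rcases le_total b r with hb | hb <;>
    simp only [min_eq_left, min_eq_right, ha, hb] <;> linarith

section LevelSets

variable {V : Type*} [Fintype V] {w : V → ℝ} {r : ℝ}

lemma upperLevelSet_sub_min {v : V} (hv : r < w v) :
    upperLevelSet (fun u => w u - min (w u) r) (w v - min (w v) r) = upperLevelSet w (w v) := by
  ext u
  simp only [upperLevelSet, mem_filter, mem_univ, true_and, min_eq_right hv.le]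
  rcases le_total (w u) r with hu | hu
  · rw [min_eq_left hu]
    constructor <;> intro h <;> linarith
  · rw [min_eq_right hu]
    constructor <;> intro h <;> linarith

lemma sum_min_eq_of_gap (hw : ∀ v, 0 ≤ w v) (hr : 0 < r) (hgap : ∀ v, 0 < w v → r ≤ w v) :
    ∑ v, min (w v) r = r * #(upperLevelSet w r) := by
  have hpoint : ∀ v, min (w v) r = if r ≤ w v then r else 0 := by
    intro v
    split_ifs with h
    · exact min_eq_right h
    · have hv : w v = 0 := le_antisymm (not_lt.1 fun hv => h (hgap v hv)) (hw v)
      rw [hv, min_eq_left hr.le]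
  rw [sum_congr rfl fun v _ => hpoint v, ← sum_filter, sum_const, nsmul_eq_mul, mul_comm]
  rfl

lemma sum_min_le_of_gap [DecidableEq V] (G : SimpleGraph V) [DecidableRel G.Adj]
    (c : Sym2 V → ℝ) (hw : ∀ v, 0 ≤ w v) (hgap : ∀ v, 0 < w v → r ≤ w v)
    (hc : ∀ e ∈ G.edgeFinset, ∀ u ∈ e, c e ≤ w u) :
    ∑ e ∈ G.edgeFinset, min (c e) r ≤ r * #(edgesIn G (upperLevelSet w r)) := by
  have hpoint : ∀ e ∈ G.edgeFinset,
      min (c e) r ≤ if e ∈ edgesIn G (upperLevelSet w r) then r else 0 := by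
    intro e he
    split_ifs with hE
    · exact min_le_right _ _
    · obtain ⟨u, hu, hlow⟩ : ∃ u ∈ e, w u < r := by
        simpa [edgesIn, upperLevelSet, he] using hE
      have hu0 : w u = 0 := le_antisymm (not_lt.1 fun h => (hgap u h).not_gt hlow) (hw u)
      exact (min_le_left _ _).trans (hu0 ▸ hc e he u hu)
  refine (sum_le_sum hpoint).trans_eq ?_
  rw [sum_ite_mem, inter_eq_right.2 (edgesIn_subset_edgeFinset G _), sum_const, nsmul_eq_mul,
    mul_comm]

lemma sum_lt_mul_sum_of_upperLevelSets_sparse [DecidableEq V] (G : SimpleGraph V)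
    [DecidableRel G.Adj] (d : ℝ) (w : V → ℝ) (c : Sym2 V → ℝ) (hw : ∀ v, 0 ≤ w v)
    (hc : ∀ e ∈ G.edgeFinset, ∀ u ∈ e, c e ≤ w u) (hpos : ∃ v, 0 < w v)
    (hsparse : ∀ v, 0 < w v →
      (#(edgesIn G (upperLevelSet w (w v))) : ℝ) < d * #(upperLevelSet w (w v))) :
    ∑ e ∈ G.edgeFinset, c e < d * ∑ v, w v := by
  induction hn : #(univ.filter fun v => 0 < w v) using Nat.strong_induction_on
    generalizing w c with
  | _ n ih =>
  obtain ⟨v₀, hv₀, hmin⟩ := exists_min_image (univ.filter fun v => 0 < w v) w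
    (hpos.imp fun v hv => by simpa using hv)
  set r := w v₀
  have hr : 0 < r := (mem_filter.1 hv₀).2
  have hgap : ∀ v, 0 < w v → r ≤ w v := fun v hv => hmin v (by simpa using hv)
  -- Peel off the lowest positive level `r`: `w = w' + min w r`, and the truncated pair `(w', c')`
  -- has the same positive level sets as `w`, on fewer vertices.
  set w' : V → ℝ := fun v => w v - min (w v) r
  set c' : Sym2 V → ℝ := fun e => c e - min (c e) r
  have hw' : ∀ v, 0 ≤ w' v := fun v => sub_nonneg.2 (min_le_left _ _)
  have hc' : ∀ e ∈ G.edgeFinset, ∀ u ∈ e, c' e ≤ w' u := fun e he u hu =>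
    sub_min_le_sub_min r (hc e he u hu)
  have hpos_iff : ∀ v, 0 < w' v ↔ r < w v := fun v => by
    rcases le_total (w v) r with h | h <;> simp [w', h]
  have hsum_w : ∑ v, w v = ∑ v, w' v + r * #(upperLevelSet w r) := by
    rw [← sum_min_eq_of_gap hw hr hgap, ← sum_add_distrib]
    simp [w']
  have hsum_c : ∑ e ∈ G.edgeFinset, c e ≤
      ∑ e ∈ G.edgeFinset, c' e + r * #(edgesIn G (upperLevelSet w r)) := by
    have := sum_min_le_of_gap G c hw hgap hc
    simp only [c', sum_sub_distrib]
    linarith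
  have hlevel : r * #(edgesIn G (upperLevelSet w r)) < r * (d * #(upperLevelSet w r)) :=
    mul_lt_mul_of_pos_left (hsparse v₀ hr) hr
  have hrest : ∑ e ∈ G.edgeFinset, c' e ≤ d * ∑ v, w' v := by
    by_cases hpos' : ∃ v, 0 < w' v
    · have hcard : #(univ.filter fun v => 0 < w' v) < n := by
        rw [← hn]
        refine card_lt_card ((ssubset_iff_of_subset fun v hv => ?_).2 ⟨v₀, hv₀, ?_⟩)
        · simp only [mem_filter, mem_univ, true_and, hpos_iff] at hv ⊢
          exact hr.trans hv
        · simp [hpos_iff, r]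
      refine (ih _ hcard w' c' hw' hc' hpos' (fun v hv => ?_) rfl).le
      have hrv := (hpos_iff v).1 hv
      rw [upperLevelSet_sub_min hrv]
      exact hsparse v (hr.trans hrv)
    · simp only [not_exists, not_lt] at hpos'
      have hzero : ∀ v, w' v = 0 := fun v => le_antisymm (hpos' v) (hw' v)
      rw [sum_eq_zero fun v _ => hzero v, mul_zero]
      exact sum_nonpos fun e he => (hc' e he _ (Sym2.out_fst_mem e)).trans_eq (hzero _)
  rw [hsum_w, mul_add]
  linarith

lemma exists_dense_upperLevelSet [DecidableEq V] (G : SimpleGraph V) [DecidableRel G.Adj]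
    (d : ℝ) (w : V → ℝ) (c : Sym2 V → ℝ) (hw : ∀ v, 0 ≤ w v)
    (hc : ∀ e ∈ G.edgeFinset, ∀ u ∈ e, c e ≤ w u) (hpos : ∃ v, 0 < w v)
    (hsum : d * ∑ v, w v ≤ ∑ e ∈ G.edgeFinset, c e) :
    ∃ v, 0 < w v ∧
      d * #(upperLevelSet w (w v)) ≤ (#(edgesIn G (upperLevelSet w (w v))) : ℝ) := by
  by_contra! hsparse
  exact (sum_lt_mul_sum_of_upperLevelSets_sparse G d w c hw hc hpos hsparse).not_ge hsum

end LevelSets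

section LinearProgram

variable {V C : Type*} [Fintype V] [DecidableEq V] [Fintype C] [DecidableEq C]
  {G : SimpleGraph V} [DecidableRel G.Adj] {ℓ : V → C}

omit [Fintype V] in
lemma sum_card_colorClass (S : Finset V) : ∑ c, #(colorClass ℓ S c) = #S :=
  (card_eq_sum_card_fiberwise fun v _ => mem_univ (ℓ v)).symm

lemma LPFeasible.sum_eq_one {p : C → ℕ} {x : Sym2 V → ℝ} {y : V → ℝ}
    (h : LPFeasible G ℓ p x y) (hp : 0 < ∑ c, p c) : ∑ v, y v = 1 := by
  obtain ⟨-, hsum, -⟩ := h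
  rw [← sum_fiberwise_of_maps_to (fun v _ => mem_univ (ℓ v)) y]
  simp_rw [hsum, ← sum_div]
  push_cast
  exact div_self (by exact_mod_cast hp.ne')

lemma lpFeasible_indicator (S : Finset V) :
    LPFeasible G ℓ (fun c => #(colorClass ℓ S c))
      (fun e => if e ∈ edgesIn G S then (#S : ℝ)⁻¹ else 0)
      (fun v => if v ∈ S then (#S : ℝ)⁻¹ else 0) := by
  simp only [LPFeasible, sum_card_colorClass, one_div]
  refine ⟨fun e he v hv => ?_, fun c => ?_, fun v => ?_, fun e _ => ?_, fun v => ?_⟩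
  · split_ifs with hE hS
    · rfl
    · exact absurd ((mem_filter.1 hE).2 v hv) hS
    · positivity
    · rfl
  · rw [sum_ite_mem, sum_const, nsmul_eq_mul, div_eq_mul_inv]
    congr 3
    ext v
    simp [colorClass, and_comm]
  · split_ifs
    exacts [le_rfl, by positivity]
  · split_ifs <;> positivity
  · split_ifs <;> positivity

lemma sum_indicator_edgesIn (S : Finset V) :
    ∑ e ∈ G.edgeFinset, (if e ∈ edgesIn G S then (#S : ℝ)⁻¹ else 0) = density G S := by
  rw [sum_ite_mem, inter_eq_right.2 (edgesIn_subset_edgeFinset G S), sum_const, nsmul_eq_mul,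
    density, div_eq_mul_inv]

end LinearProgram

theorem stmt11_general {V C : Type*} [Fintype V] [DecidableEq V] [Fintype C] [DecidableEq C]
    (G : SimpleGraph V) [DecidableRel G.Adj] (ℓ : V → C) (k : C → ℕ)
    (hk : ∃ c : C, 1 ≤ k c)
    (Sstar : Finset V)
    (hfeas : ∀ c : C, k c ≤ (colorClass ℓ Sstar c).card)
    (xstar : Sym2 V → ℝ) (ystar : V → ℝ)
    (hLPfeas : LPFeasible G ℓ (fun c => (colorClass ℓ Sstar c).card) xstar ystar)
    (hLPopt : ∀ (x : Sym2 V → ℝ) (y : V → ℝ),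
      LPFeasible G ℓ (fun c => (colorClass ℓ Sstar c).card) x y →
      ∑ e ∈ G.edgeFinset, x e ≤ ∑ e ∈ G.edgeFinset, xstar e) :
    ∃ (r : ℝ) (S' : Finset V), (r = 0 ∨ ∃ v : V, r = ystar v) ∧
      Finset.univ.filter (fun v => r ≤ ystar v) ⊆ S' ∧
      (∀ c : C, k c ≤ (colorClass ℓ S' c).card) ∧
      density G Sstar / 3 ≤ density G S' := by
  have hS : 0 < #Sstar := by
    obtain ⟨c, hc⟩ := hk
    exact (hc.trans (hfeas c)).trans (card_filter_le _ _)
  have hy : ∑ v, ystar v = 1 := hLPfeas.sum_eq_one (by rwa [sum_card_colorClass])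
  have hLP : density G Sstar ≤ ∑ e ∈ G.edgeFinset, xstar e :=
    sum_indicator_edgesIn (G := G) Sstar ▸ hLPopt _ _ (lpFeasible_indicator Sstar)
  obtain ⟨hx, -, -, -, hy_nonneg⟩ := hLPfeas
  have hpos : ∃ v, 0 < ystar v := by
    obtain ⟨v, -, hv⟩ := exists_lt_of_sum_lt (s := univ) (f := 0) (g := ystar) (by simp [hy])
    exact ⟨v, hv⟩
  obtain ⟨v, -, hdense⟩ := exists_dense_upperLevelSet G (density G Sstar) ystar xstar hy_nonneg
    hx hpos (by rwa [hy, mul_one])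
  refine ⟨ystar v, upperLevelSet ystar (ystar v) ∪ Sstar, .inr ⟨v, rfl⟩, subset_union_left,
    fun c => (hfeas c).trans (card_le_card (filter_subset_filter _ subset_union_right)), ?_⟩
  have hd := density_nonneg G Sstar
  calc density G Sstar / 3 ≤ density G Sstar / 2 := by linarith
    _ ≤ _ := half_le_density_union G hd ⟨v, by simp [upperLevelSet]⟩ hdense
      (density_mul_card_le G Sstar)

/-- `1/3`-approximation via the LP: some level set `S(r)` of an optimal LP solution for
`p* = (|S*_c|)_c` extends to a feasible set `S'` with `d(S') ≥ d(S*)/3`. -/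
theorem stmt11 {V C : Type*} [Fintype V] [DecidableEq V] [Fintype C] [DecidableEq C]
    (G : SimpleGraph V) [DecidableRel G.Adj] (ℓ : V → C) (k : C → ℕ)
    (hkle : ∀ c : C, k c ≤ (colorClass ℓ Finset.univ c).card)
    (hk : ∃ c : C, 1 ≤ k c)
    (Sstar : Finset V)
    (hfeas : ∀ c : C, k c ≤ (colorClass ℓ Sstar c).card)
    (hopt : ∀ T : Finset V, (∀ c : C, k c ≤ (colorClass ℓ T c).card) →
      density G T ≤ density G Sstar)
    (xstar : Sym2 V → ℝ) (ystar : V → ℝ)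
    (hLPfeas : LPFeasible G ℓ (fun c => (colorClass ℓ Sstar c).card) xstar ystar)
    (hLPopt : ∀ (x : Sym2 V → ℝ) (y : V → ℝ),
      LPFeasible G ℓ (fun c => (colorClass ℓ Sstar c).card) x y →
      ∑ e ∈ G.edgeFinset, x e ≤ ∑ e ∈ G.edgeFinset, xstar e) :
    ∃ (r : ℝ) (S' : Finset V), (r = 0 ∨ ∃ v : V, r = ystar v) ∧
      Finset.univ.filter (fun v => r ≤ ystar v) ⊆ S' ∧
      (∀ c : C, k c ≤ (colorClass ℓ S' c).card) ∧
      density G Sstar / 3 ≤ density G S' :=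
  stmt11_general G ℓ k hk Sstar hfeas xstar ystar hLPfeas hLPopt
end

section
/- Let G = (V, E) be a finite simple undirected graph, ℓ : V → C a coloring, and k⃗ = (k_c)_{c∈C} ∈ ℤ_{≥0}^{|C|}. Suppose S* ⊆ V is an optimal solution for Dal k⃗ S satisfying |S*_c| > k_c for every c ∈ C with k_c ≥ 1 (optimal means S* is feasible and d(S*) ≥ d(T) for every feasible T). If S' satisfies S* ⊆ S' ⊆ V and there is a vertex v* ∈ S* of minimum degree in the induced subgraph G[S'] (i.e., deg_{S'}(v*) ≤ deg_{S'}(u) for every u ∈ S'), then S' is feasible for Dal k⃗ S and d(S') ≥ d(S*)/2. -/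
open Finset

/-- `deg_S(v)`, the degree of `v` in the induced subgraph `G[S]`. -/
def degIn {V : Type*} [DecidableEq V] (G : SimpleGraph V) [DecidableRel G.Adj]
    (S : Finset V) (v : V) : ℕ :=
  (S.filter (fun u => G.Adj v u)).card

/-! Peeling one vertex `v*` off `S*` is feasible, so optimality gives `d(S*) ≤ deg_{S*}(v*)`;
monotonicity of degrees gives `deg_{S*}(v*) ≤ deg_{S'}(v*)`, and since `v*` has minimum degree
in `G[S']`, the handshake lemma gives `deg_{S'}(v*) ≤ 2 d(S')`. -/

section Coloring

variable {V C : Type*} [DecidableEq V] [DecidableEq C] (ℓ : V → C)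

lemma card_colorClass_mono {S T : Finset V} (h : S ⊆ T) (c : C) :
    #(colorClass ℓ S c) ≤ #(colorClass ℓ T c) :=
  card_le_card (filter_subset_filter _ h)

lemma le_card_colorClass_erase {S : Finset V} {c : C} {k : ℕ} (h : k < #(colorClass ℓ S c))
    (v : V) : k ≤ #(colorClass ℓ (S.erase v) c) := by
  rw [colorClass, filter_erase]
  have := pred_card_le_card_erase (s := colorClass ℓ S c) (a := v)
  rw [colorClass] at h this
  omega

end Coloring

section Graph

variable {V : Type*}

/-- `G[S]` as a graph on all of `V`, vertices outside `S` being isolated, so that Mathlib's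
handshake lemma applies to it. -/
def inducedOn (G : SimpleGraph V) (S : Finset V) : SimpleGraph V where
  Adj u v := G.Adj u v ∧ u ∈ S ∧ v ∈ S
  symm := ⟨fun _ _ ⟨h, hu, hv⟩ => ⟨h.symm, hv, hu⟩⟩
  loopless := ⟨fun v h => G.loopless.irrefl v h.1⟩

@[simp]
lemma inducedOn_adj (G : SimpleGraph V) (S : Finset V) {u v : V} :
    (inducedOn G S).Adj u v ↔ G.Adj u v ∧ u ∈ S ∧ v ∈ S :=
  Iff.rfl

variable [DecidableEq V]

instance (G : SimpleGraph V) [DecidableRel G.Adj] (S : Finset V) :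
    DecidableRel (inducedOn G S).Adj :=
  fun u v => inferInstanceAs (Decidable (G.Adj u v ∧ u ∈ S ∧ v ∈ S))

lemma degIn_mono (G : SimpleGraph V) [DecidableRel G.Adj] {S T : Finset V} (h : S ⊆ T) (v : V) :
    degIn G S v ≤ degIn G T v :=
  card_le_card (filter_subset_filter _ h)

variable [Fintype V] (G : SimpleGraph V) [DecidableRel G.Adj]

lemma mem_edgesIn {S : Finset V} {a b : V} :
    s(a, b) ∈ edgesIn G S ↔ G.Adj a b ∧ a ∈ S ∧ b ∈ S := by
  simp [edgesIn]

lemma edgeFinset_inducedOn (S : Finset V) : (inducedOn G S).edgeFinset = edgesIn G S := by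
  ext e
  induction e using Sym2.ind with
  | _ a b => rw [mem_edgesIn, SimpleGraph.mem_edgeFinset, SimpleGraph.mem_edgeSet, inducedOn_adj]

lemma degree_inducedOn {S : Finset V} {u : V} (hu : u ∈ S) :
    (inducedOn G S).degree u = degIn G S u := by
  rw [← SimpleGraph.card_neighborFinset_eq_degree, degIn]
  congr 1
  ext w
  simp [hu, and_comm]

lemma degree_inducedOn_of_notMem {S : Finset V} {u : V} (hu : u ∉ S) :
    (inducedOn G S).degree u = 0 := by
  rw [← SimpleGraph.card_neighborFinset_eq_degree, card_eq_zero, eq_empty_iff_forall_notMem]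
  intro w hw
  exact hu ((inducedOn_adj G S).1 ((SimpleGraph.mem_neighborFinset _ _ _).1 hw)).2.1

theorem sum_degIn_eq_two_mul_card_edgesIn (S : Finset V) :
    ∑ u ∈ S, degIn G S u = 2 * #(edgesIn G S) := by
  calc ∑ u ∈ S, degIn G S u = ∑ u ∈ S, (inducedOn G S).degree u :=
        (sum_congr rfl fun u hu => degree_inducedOn G hu).symm
    _ = ∑ u, (inducedOn G S).degree u :=
        sum_subset (subset_univ S) fun u _ hu => degree_inducedOn_of_notMem G hu
    _ = 2 * #(edgesIn G S) := by
        rw [SimpleGraph.sum_degrees_eq_twice_card_edges, edgeFinset_inducedOn]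

lemma edgesIn_erase (S : Finset V) (v : V) :
    edgesIn G (S.erase v) = (edgesIn G S).filter (v ∉ ·) := by
  ext e
  simp only [edgesIn, mem_filter, mem_erase]
  grind

lemma card_edgesIn_erase_add_degIn {S : Finset V} {v : V} (hv : v ∈ S) :
    #(edgesIn G (S.erase v)) + degIn G S v = #(edgesIn G S) := by
  have hinc : (edgesIn G S).filter (v ∈ ·) = (inducedOn G S).incidenceFinset v := by
    rw [SimpleGraph.incidenceFinset_eq_filter, edgeFinset_inducedOn]
  rw [edgesIn_erase, ← degree_inducedOn G hv, ← SimpleGraph.card_incidenceFinset_eq_degree,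
    ← hinc, add_comm]
  exact card_filter_add_card_filter_not _

lemma edgesIn_empty : edgesIn G ∅ = ∅ := by
  ext e
  induction e using Sym2.ind with
  | _ a b => simp [mem_edgesIn]

theorem density_le_degIn_of_density_erase_le {S : Finset V} {v : V} (hv : v ∈ S)
    (h : density G (S.erase v) ≤ density G S) : density G S ≤ degIn G S v := by
  have hm := card_edgesIn_erase_add_degIn G hv
  have hn := card_erase_add_one hv
  rcases (S.erase v).eq_empty_or_nonempty with hempty | hne
  · rw [hempty, edgesIn_empty, card_empty, zero_add] at hm
    rw [hempty, card_empty, zero_add] at hn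
    simp [density, ← hm, ← hn]
  · have hpos : (0 : ℝ) < #(S.erase v) := by exact_mod_cast hne.card_pos
    unfold density at h ⊢
    rw [← hm, ← hn] at h ⊢
    push_cast at h ⊢
    rw [div_le_div_iff₀ hpos (by positivity)] at h
    rw [div_le_iff₀ (by positivity)]
    nlinarith

theorem degIn_le_two_mul_density {S : Finset V} {v : V} (hv : v ∈ S)
    (hmin : ∀ u ∈ S, degIn G S v ≤ degIn G S u) : (degIn G S v : ℝ) ≤ 2 * density G S := by
  have hsum : #S * degIn G S v ≤ 2 * #(edgesIn G S) := by
    rw [← sum_degIn_eq_two_mul_card_edgesIn, ← smul_eq_mul]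
    exact card_nsmul_le_sum _ _ _ hmin
  have hS : (0 : ℝ) < #S := by exact_mod_cast card_pos.2 ⟨v, hv⟩
  rw [density, mul_div_assoc', le_div_iff₀ hS, mul_comm]
  exact_mod_cast hsum

end Graph

theorem stmt13_general {V C : Type*} [Fintype V] [DecidableEq V] [DecidableEq C]
    (G : SimpleGraph V) [DecidableRel G.Adj] (ℓ : V → C) (k : C → ℕ)
    (Sstar : Finset V)
    (hfeas : ∀ c : C, k c ≤ (colorClass ℓ Sstar c).card)
    (hstrict : ∀ c : C, 1 ≤ k c → k c < (colorClass ℓ Sstar c).card)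
    (hopt : ∀ T : Finset V, (∀ c : C, k c ≤ (colorClass ℓ T c).card) →
      density G T ≤ density G Sstar)
    (S' : Finset V) (hsub : Sstar ⊆ S')
    (vstar : V) (hv : vstar ∈ Sstar)
    (hmin : ∀ u ∈ S', degIn G S' vstar ≤ degIn G S' u) :
    (∀ c : C, k c ≤ (colorClass ℓ S' c).card) ∧
      density G Sstar / 2 ≤ density G S' := by
  refine ⟨fun c => (hfeas c).trans (card_colorClass_mono ℓ hsub c), ?_⟩
  have hfeas_erase : ∀ c : C, k c ≤ #(colorClass ℓ (Sstar.erase vstar) c) := by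
    intro c
    rcases Nat.eq_zero_or_pos (k c) with hk | hk
    · simp [hk]
    · exact le_card_colorClass_erase ℓ (hstrict c hk) vstar
  have hpeel := density_le_degIn_of_density_erase_le G hv (hopt _ hfeas_erase)
  have hdeg : (degIn G Sstar vstar : ℝ) ≤ degIn G S' vstar := by
    exact_mod_cast degIn_mono G hsub vstar
  linarith [degIn_le_two_mul_density G (hsub hv) hmin]

/-- Greedy peeling guarantee: if `S*` is an optimal Dal`k⃗`S solution satisfying all (positive)
demands strictly, and `S' ⊇ S*` contains a vertex of `S*` of minimum induced degree in `G[S']`,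
then `S'` is feasible and `d(S') ≥ d(S*)/2`. -/
theorem stmt13 {V C : Type*} [Fintype V] [DecidableEq V] [Fintype C] [DecidableEq C]
    (G : SimpleGraph V) [DecidableRel G.Adj] (ℓ : V → C) (k : C → ℕ)
    (Sstar : Finset V)
    (hfeas : ∀ c : C, k c ≤ (colorClass ℓ Sstar c).card)
    (hstrict : ∀ c : C, 1 ≤ k c → k c < (colorClass ℓ Sstar c).card)
    (hopt : ∀ T : Finset V, (∀ c : C, k c ≤ (colorClass ℓ T c).card) →
      density G T ≤ density G Sstar)
    (S' : Finset V) (hsub : Sstar ⊆ S')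
    (vstar : V) (hv : vstar ∈ Sstar)
    (hmin : ∀ u ∈ S', degIn G S' vstar ≤ degIn G S' u) :
    (∀ c : C, k c ≤ (colorClass ℓ S' c).card) ∧
      density G Sstar / 2 ≤ density G S' :=
  stmt13_general G ℓ k Sstar hfeas hstrict hopt S' hsub vstar hv hmin
end
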